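/- Let W' be a reflection subgroup of W, and suppose x, y ∈ Δ₁(W') with r_x ≠ r_y. Let n ∈ ℕ ∪ {∞} be the order of r_x·r_y. Then ⟨x, φ(y)⟩ ≤ 0; moreover ⟨x, φ(y)⟩·⟨y, φ(x)⟩ = cos²(π/n) if n ∈ ℕ with n ≥ 2, and ⟨x, φ(y)⟩·⟨y, φ(x)⟩ ∈ [1, ∞) if n = ∞. -/

import Mathlib

open Pointwise

/-- The positive linear cone of a subset `A` of a real vector space: finite linear
combinations of elements of `A` with all coefficients nonnegative and at least one
strictly positive. -/
def PLC {V : Type*} [AddCommGroup V] [Module ℝ V] (A : Set V) : Set V :=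
  { v | ∃ c : V →₀ ℝ, (∀ a, 0 ≤ c a) ∧ ↑c.support ⊆ A ∧ c ≠ 0 ∧
          v = c.sum fun a t => t • a }

/-- `altEnd a b m` is the alternating product `⋯ a b a b` … of `m` factors,
ending with `b` (e.g. `altEnd a b 3 = b * a * b`). -/
def altEnd {G : Type*} [Monoid G] : G → G → ℕ → G
  | _, _, 0 => 1
  | a, b, m + 1 => altEnd b a m * b

/-- The class of `z` under the equivalence "being nonzero scalar multiples of each
other" (the class `ẑ`). -/
def rayClass {V : Type*} [AddCommGroup V] [Module ℝ V] (z : V) : Set V :=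
  { v | ∃ c : ℝ, c ≠ 0 ∧ v = c • z }

/-- The set `Â = {ẑ : z ∈ A}` of scalar-equivalence classes of elements of `A`. -/
def rayClasses {V : Type*} [AddCommGroup V] [Module ℝ V] (A : Set V) : Set (Set V) :=
  { C | ∃ z ∈ A, C = rayClass z }

/-- A Coxeter datum `(S, V₁, V₂, Π₁, Π₂, ⟨·,·⟩)` satisfying (D1)–(D5), together with
its associated abstract Coxeter group `W` (a group generated by involutions
`r s`, acting faithfully on `V₁` and `V₂` in the prescribed way, with the pairing
`W`-invariant), the decomposition `Φᵢ = Φᵢ⁺ ⊎ Φᵢ⁻` of the paired root systems, the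
`W`-equivariant bijection `φ : Φ₁ → Φ₂` (with inverse `phiInv`), and the reflections
`r_x ∈ T` attached to the roots `x ∈ Φ₁` (`refl₁`) resp. `y ∈ Φ₂` (`refl₂`). -/
structure CoxeterDatum (S : Type*) (V₁ : Type*) (V₂ : Type*) (W : Type*)
    [AddCommGroup V₁] [Module ℝ V₁] [AddCommGroup V₂] [Module ℝ V₂] [Group W] where
  pair : V₁ →ₗ[ℝ] V₂ →ₗ[ℝ] ℝ
  α : S → V₁
  β : S → V₂
  α_inj : Function.Injective α
  β_inj : Function.Injective β
  D1 : ∀ s, pair (α s) (β s) = 1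
  D2a : (0 : V₁) ∉ PLC (Set.range α)
  D2b : (0 : V₂) ∉ PLC (Set.range β)
  D2c : ∀ s, α s ∉ PLC (Set.range α \ {α s})
  D2d : ∀ s, β s ∉ PLC (Set.range β \ {β s})
  D3 : ∀ s t, s ≠ t → pair (α s) (β t) ≤ 0
  D4 : ∀ s t, pair (α s) (β t) = 0 → pair (α t) (β s) = 0
  D5 : ∀ s t, s ≠ t →
    (∃ m : ℕ, 2 ≤ m ∧ pair (α s) (β t) * pair (α t) (β s) = Real.cos (Real.pi / m) ^ 2) ∨
      1 ≤ pair (α s) (β t) * pair (α t) (β s)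
  /-- the Coxeter generators `R = {r s : s ∈ S}` of `W` -/
  r : S → W
  r_gen : Subgroup.closure (Set.range r) = ⊤
  r_ne_one : ∀ s, r s ≠ 1
  r_sq : ∀ s, r s * r s = 1
  /-- the faithful action of `W` on `V₁` -/
  ρ₁ : W →* Module.End ℝ V₁
  /-- the faithful action of `W` on `V₂` -/
  ρ₂ : W →* Module.End ℝ V₂
  ρ₁_inj : Function.Injective ρ₁
  ρ₂_inj : Function.Injective ρ₂
  hr₁ : ∀ s x, ρ₁ (r s) x = x - (2 * pair x (β s)) • α s
  hr₂ : ∀ s y, ρ₂ (r s) y = y - (2 * pair (α s) y) • β s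
  pair_inv : ∀ w x y, pair (ρ₁ w x) (ρ₂ w y) = pair x y
  /-- the `W`-equivariant bijection `φ : Φ₁ → Φ₂` -/
  phi : V₁ → V₂
  /-- the inverse `φ⁻¹ : Φ₂ → Φ₁` -/
  phiInv : V₂ → V₁
  /-- the reflection `r_x` corresponding to a root `x ∈ Φ₁` -/
  refl₁ : V₁ → W
  /-- the reflection `r_y` corresponding to a root `y ∈ Φ₂` -/
  refl₂ : V₂ → W
  decomp₁ : { v | ∃ w s, v = ρ₁ w (α s) } =
      ({ v | ∃ w s, v = ρ₁ w (α s) } ∩ PLC (Set.range α)) ∪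
        (-({ v | ∃ w s, v = ρ₁ w (α s) } ∩ PLC (Set.range α)))
  disj₁ : Disjoint ({ v | ∃ w s, v = ρ₁ w (α s) } ∩ PLC (Set.range α))
      (-({ v | ∃ w s, v = ρ₁ w (α s) } ∩ PLC (Set.range α)))
  decomp₂ : { v | ∃ w s, v = ρ₂ w (β s) } =
      ({ v | ∃ w s, v = ρ₂ w (β s) } ∩ PLC (Set.range β)) ∪
        (-({ v | ∃ w s, v = ρ₂ w (β s) } ∩ PLC (Set.range β)))
  disj₂ : Disjoint ({ v | ∃ w s, v = ρ₂ w (β s) } ∩ PLC (Set.range β))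
      (-({ v | ∃ w s, v = ρ₂ w (β s) } ∩ PLC (Set.range β)))
  phi_mem : ∀ x ∈ { v | ∃ w s, v = ρ₁ w (α s) }, phi x ∈ { v | ∃ w s, v = ρ₂ w (β s) }
  phiInv_mem : ∀ y ∈ { v | ∃ w s, v = ρ₂ w (β s) }, phiInv y ∈ { v | ∃ w s, v = ρ₁ w (α s) }
  phiInv_phi : ∀ x ∈ { v | ∃ w s, v = ρ₁ w (α s) }, phiInv (phi x) = x
  phi_phiInv : ∀ y ∈ { v | ∃ w s, v = ρ₂ w (β s) }, phi (phiInv y) = y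
  phi_simple : ∀ s, phi (α s) = β s
  phi_equiv : ∀ w, ∀ x ∈ { v | ∃ w s, v = ρ₁ w (α s) }, phi (ρ₁ w x) = ρ₂ w (phi x)
  refl₁_eq : ∀ w s, refl₁ (ρ₁ w (α s)) = w * r s * w⁻¹
  refl₂_eq : ∀ w s, refl₂ (ρ₂ w (β s)) = w * r s * w⁻¹
  refl₁_act : ∀ x ∈ { v | ∃ w s, v = ρ₁ w (α s) }, ∀ v,
      ρ₁ (refl₁ x) v = v - (2 * pair v (phi x)) • x
  refl₂_act : ∀ y ∈ { v | ∃ w s, v = ρ₂ w (β s) }, ∀ v,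
      ρ₂ (refl₂ y) v = v - (2 * pair (phiInv y) v) • y

namespace CoxeterDatum

variable {S V₁ V₂ W : Type*} [AddCommGroup V₁] [Module ℝ V₁]
  [AddCommGroup V₂] [Module ℝ V₂] [Group W]

variable (D : CoxeterDatum S V₁ V₂ W)

/-- The root system `Φ₁ = W Π₁`. -/
def Phi₁ : Set V₁ := { v | ∃ w s, v = D.ρ₁ w (D.α s) }

/-- The root system `Φ₂ = W Π₂`. -/
def Phi₂ : Set V₂ := { v | ∃ w s, v = D.ρ₂ w (D.β s) }

/-- The positive roots `Φ₁⁺ = Φ₁ ∩ PLC Π₁`. -/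
def PhiPos₁ : Set V₁ := D.Phi₁ ∩ PLC (Set.range D.α)

/-- The positive roots `Φ₂⁺ = Φ₂ ∩ PLC Π₂`. -/
def PhiPos₂ : Set V₂ := D.Phi₂ ∩ PLC (Set.range D.β)

/-- The negative roots `Φ₁⁻ = -Φ₁⁺`. -/
def PhiNeg₁ : Set V₁ := -D.PhiPos₁

/-- The negative roots `Φ₂⁻ = -Φ₂⁺`. -/
def PhiNeg₂ : Set V₂ := -D.PhiPos₂

/-- The set `T = ⋃_{w ∈ W} w R w⁻¹` of reflections of `W`. -/
def T : Set W := { t | ∃ w s, t = w * D.r s * w⁻¹ }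

/-- The length function `ℓ` of `W` with respect to the Coxeter generators `R`. -/
noncomputable def len (w : W) : ℕ :=
  sInf { n | ∃ l : List S, l.length = n ∧ (l.map D.r).prod = w }

/-- `N̄ w = {t ∈ T : ℓ(w t) < ℓ(w)}`. -/
noncomputable def Nbar (w : W) : Set W :=
  { t | t ∈ D.T ∧ D.len (w * t) < D.len w }

/-- `N₁ w = {ẑ : z ∈ Φ₁⁺, w z ∈ Φ₁⁻}`. -/
def N₁ (w : W) : Set (Set V₁) :=
  { C | ∃ z, z ∈ D.PhiPos₁ ∧ D.ρ₁ w z ∈ D.PhiNeg₁ ∧ C = rayClass z }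

/-- `N₂ w = {ẑ : z ∈ Φ₂⁺, w z ∈ Φ₂⁻}`. -/
def N₂ (w : W) : Set (Set V₂) :=
  { C | ∃ z, z ∈ D.PhiPos₂ ∧ D.ρ₂ w z ∈ D.PhiNeg₂ ∧ C = rayClass z }

/-- A subgroup `W'` of `W` is a reflection subgroup when `W' = ⟨W' ∩ T⟩`. -/
def IsReflectionSubgroup (W' : Subgroup W) : Prop :=
  W' = Subgroup.closure ((W' : Set W) ∩ D.T)

/-- `Φ₁(W') = {x ∈ Φ₁ : r_x ∈ W'}`. -/
def PhiSub₁ (W' : Subgroup W) : Set V₁ :=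
  { x | x ∈ D.Phi₁ ∧ D.refl₁ x ∈ W' }

/-- `Φ₂(W') = {y ∈ Φ₂ : r_y ∈ W'}`. -/
def PhiSub₂ (W' : Subgroup W) : Set V₂ :=
  { y | y ∈ D.Phi₂ ∧ D.refl₂ y ∈ W' }

/-- The canonical generators `S(W') = {t ∈ T : N̄(t) ∩ W' = {t}}`. -/
noncomputable def SW (W' : Subgroup W) : Set W :=
  { t | t ∈ D.T ∧ D.Nbar t ∩ (W' : Set W) = {t} }

/-- `Δ₁(W') = {x ∈ Φ₁⁺ : r_x ∈ S(W')}`. -/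
noncomputable def Delta₁ (W' : Subgroup W) : Set V₁ :=
  { x | x ∈ D.PhiPos₁ ∧ D.refl₁ x ∈ D.SW W' }

/-- `Δ₂(W') = {y ∈ Φ₂⁺ : r_y ∈ S(W')}`. -/
noncomputable def Delta₂ (W' : Subgroup W) : Set V₂ :=
  { y | y ∈ D.PhiPos₂ ∧ D.refl₂ y ∈ D.SW W' }

/-- The length function `ℓ_{W'}` of a reflection subgroup `W'` with respect to its
canonical generators `S(W')`. -/
noncomputable def lenIn (W' : Subgroup W) (w : W) : ℕ :=
  sInf { n | ∃ l : List W, l.length = n ∧ (∀ t ∈ l, t ∈ D.SW W') ∧ l.prod = w }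

end CoxeterDatum

/-!
Write `t = r_x`, `t' = r_y`, `a = ⟨x, φ y⟩` and `b = ⟨y, φ x⟩`. The roots
`x, t' x, t t' x, t' t t' x, …` lie in the plane of `x` and `y`, and their coordinates obey a
two-term recursion. A canonical generator of `W'` sends every positive root of `W'` other than its
own to a positive root (if `w z < 0` then `ℓ(w r_z) < ℓ(w)`), so the chain stays in `Φ₁⁺` until it
reaches a multiple of `x` or `y`, which happens at step `k` exactly when `(t t')^(k+1) = 1`
(proportional roots have equal reflections, by faithfulness of the action on `V₁`).

The first two steps of the chain force `a ≤ 0`. If `a b = cos² θ` with `0 < θ < π/2`, the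
coordinates are multiples of `sin (j θ)`; both become nonpositive after about `π / θ` steps, so the
order `n` of `t t'` satisfies `(n - 1) θ < π`, while the stop at step `n - 1` gives `sin (n θ) = 0`;
hence `θ = π / n`. If `a b ≥ 1`, the coordinates stay positive and the chain never stops.
-/

open Real

namespace PLC

variable {V : Type*} [AddCommGroup V] [Module ℝ V] {A B : Set V} {u v : V}

theorem mono (hAB : A ⊆ B) : PLC A ⊆ PLC B :=
  fun _ ⟨c, hc0, hcA, hc, hv⟩ => ⟨c, hc0, hcA.trans hAB, hc, hv⟩

theorem subset : A ⊆ PLC A := by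
  classical
  intro a ha
  refine ⟨Finsupp.single a 1, fun b => ?_, ?_, by simp, by simp⟩
  · rw [Finsupp.single_apply]; split_ifs <;> norm_num
  · simpa using ha

theorem add_mem (hu : u ∈ PLC A) (hv : v ∈ PLC A) : u + v ∈ PLC A := by
  classical
  obtain ⟨c, hc0, hcA, hc, rfl⟩ := hu
  obtain ⟨d, hd0, hdA, -, rfl⟩ := hv
  refine ⟨c + d, fun a => add_nonneg (hc0 a) (hd0 a), ?_, ?_, ?_⟩
  · exact (Finset.coe_subset.2 Finsupp.support_add).trans
      (by simpa using Set.union_subset hcA hdA)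
  · intro h
    refine hc (Finsupp.ext fun a => ?_)
    have := DFunLike.congr_fun h a
    simp only [Finsupp.add_apply, Finsupp.coe_zero, Pi.zero_apply] at this ⊢
    linarith [hc0 a, hd0 a]
  · exact (Finsupp.sum_add_index' (fun a => zero_smul ℝ a) fun a _ _ => add_smul _ _ a).symm

theorem smul_mem {r : ℝ} (hr : 0 < r) (hu : u ∈ PLC A) : r • u ∈ PLC A := by
  classical
  obtain ⟨c, hc0, hcA, hc, rfl⟩ := hu
  refine ⟨r • c, fun a => mul_nonneg hr.le (hc0 a),
    (Finset.coe_subset.2 Finsupp.support_smul).trans hcA, smul_ne_zero hr.ne' hc, ?_⟩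
  rw [Finsupp.smul_sum, Finsupp.sum_smul_index fun a => zero_smul ℝ a]
  exact Finsupp.sum_congr fun a _ => (mul_smul r (c a) a).symm

theorem add_smul_mem {r : ℝ} (hr : 0 ≤ r) (hu : u ∈ PLC A) (hv : v ∈ PLC A) :
    u + r • v ∈ PLC A := by
  rcases hr.eq_or_lt with rfl | hr
  · simpa using hu
  · exact add_mem hu (smul_mem hr hv)

theorem ne_zero (h0 : (0 : V) ∉ PLC A) (hu : u ∈ PLC A) : u ≠ 0 :=
  fun h => h0 (h ▸ hu)

theorem neg_notMem (h0 : (0 : V) ∉ PLC A) (hu : u ∈ PLC A) : -u ∉ PLC A :=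
  fun h => h0 (by simpa using add_mem hu h)

theorem exists_eq_smul_add (hu : u ∈ PLC A) (v : V) :
    ∃ c : ℝ, 0 ≤ c ∧ ∃ w, (w = 0 ∨ w ∈ PLC (A \ {v})) ∧ u = c • v + w := by
  classical
  obtain ⟨f, hf0, hfA, -, rfl⟩ := hu
  refine ⟨f v, hf0 v, (f.erase v).sum fun a t => t • a, ?_, ?_⟩
  · rcases eq_or_ne (f.erase v) 0 with h | h
    · exact Or.inl (by rw [h, Finsupp.sum_zero_index])
    · refine Or.inr ⟨f.erase v, fun a => ?_, ?_, h, rfl⟩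
      · rcases eq_or_ne a v with rfl | ha
        · simp
        · simpa [Finsupp.erase_ne ha] using hf0 a
      · intro a ha
        rw [Finset.mem_coe, Finsupp.support_erase, Finset.mem_erase] at ha
        exact ⟨hfA ha.2, ha.1⟩
  · conv_lhs => rw [← Finsupp.erase_add_single v f]
    rw [Finsupp.sum_add_index' (fun a => zero_smul ℝ a) fun a _ _ => add_smul _ _ a,
      Finsupp.sum_single_index (zero_smul ℝ v), add_comm]

theorem eq_smul_of_add_eq_smul (h0 : (0 : V) ∉ PLC A) (hv : v ∈ A) (hext : v ∉ PLC (A \ {v}))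
    {u' : V} {μ : ℝ} (hu : u ∈ PLC A) (hu' : u' ∈ PLC A) (h : u + u' = μ • v) :
    ∃ c : ℝ, 0 < c ∧ u = c • v := by
  have hsub : PLC (A \ {v}) ⊆ PLC A := mono Set.sdiff_subset
  obtain ⟨c, hc, w, hw, rfl⟩ := exists_eq_smul_add hu v
  obtain ⟨c', hc', w', hw', rfl⟩ := exists_eq_smul_add hu' v
  rcases hw with rfl | hw
  · refine ⟨c, hc.lt_of_ne ?_, by rw [add_zero]⟩
    rintro rfl
    exact ne_zero h0 hu (by simp)
  exfalso
  have hsum : w + w' ∈ PLC (A \ {v}) := by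
    rcases hw' with rfl | hw'
    · simpa using hw
    · exact add_mem hw hw'
  have hww' : w + w' = (μ - c - c') • v := by
    rw [sub_smul, sub_smul, ← h]; module
  rcases lt_or_ge 0 (μ - c - c') with hpos | hnonpos
  · refine hext ?_
    have := smul_mem (inv_pos.2 hpos) hsum
    rwa [hww', smul_smul, inv_mul_cancel₀ hpos.ne', one_smul] at this
  · refine h0 ?_
    have := add_smul_mem (neg_nonneg.2 hnonpos) (hsub hsum) (subset hv)
    rwa [hww', ← add_smul, add_neg_cancel, zero_smul] at this

end PLC

section AltEnd

variable {G : Type*}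

theorem altEnd_succ' [Monoid G] (a b : G) (k : ℕ) :
    altEnd a b (k + 1) = (if Even k then b else a) * altEnd a b k := by
  induction k generalizing a b with
  | zero => simp [altEnd]
  | succ k ih =>
    rw [altEnd, ih, altEnd, mul_assoc]
    simp only [Nat.even_add_one, ite_not]

theorem altEnd_mem {H : Type*} [Monoid G] [SetLike H G] [SubmonoidClass H G] {K : H}
    {a b : G} (ha : a ∈ K) (hb : b ∈ K) (k : ℕ) : altEnd a b k ∈ K := by
  induction k generalizing a b with
  | zero => exact one_mem K
  | succ k ih => exact mul_mem (ih hb ha) hb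

theorem inv_altEnd_mul_altEnd [Group G] {a b : G} (ha : a⁻¹ = a) (hb : b⁻¹ = b) (m : ℕ) :
    (altEnd b a m)⁻¹ * altEnd a b m = (a * b) ^ m := by
  induction m generalizing a b with
  | zero => simp [altEnd]
  | succ m ih =>
    have hsemiconj : SemiconjBy a (b * a) (a * b) := (mul_assoc a b a).symm
    rw [altEnd, altEnd, mul_inv_rev, ha, mul_assoc, ← mul_assoc _ _ b, ih hb ha,
      ← mul_assoc, (hsemiconj.pow_right m).eq, pow_succ, mul_assoc]

theorem altEnd_eq_altEnd_iff [Group G] {a b : G} (ha : a⁻¹ = a) (hb : b⁻¹ = b) (m : ℕ) :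
    altEnd b a m = altEnd a b m ↔ (a * b) ^ m = 1 := by
  rw [← inv_altEnd_mul_altEnd ha hb, inv_mul_eq_one]

end AltEnd

section Trigonometry

variable {θ : ℝ}

theorem exists_sin_mul_nonpos (hθ : 0 < θ) (hθ' : θ < π / 2) :
    ∃ k : ℕ, (k : ℝ) < π / θ + 1 ∧ sin (k * θ) ≤ 0 ∧ sin ((k + 1 : ℕ) * θ) ≤ 0 := by
  have hnonpos : ∀ x, π ≤ x → x ≤ 2 * π → sin x ≤ 0 := fun x h1 h2 => by
    rw [← neg_nonneg, ← sin_sub_pi]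
    exact sin_nonneg_of_nonneg_of_le_pi (by linarith) (by linarith)
  set k := ⌈π / θ⌉₊
  have hk : π ≤ k * θ := (div_le_iff₀ hθ).1 (Nat.le_ceil _)
  have hk' : (k : ℝ) < π / θ + 1 := Nat.ceil_lt_add_one (by positivity)
  have hkθ : k * θ < π + θ := by
    have := mul_lt_mul_of_pos_right hk' hθ
    rwa [add_mul, div_mul_cancel₀ _ hθ.ne', one_mul] at this
  refine ⟨k, hk', hnonpos _ hk (by linarith), hnonpos _ ?_ ?_⟩ <;> push_cast <;> linarith

theorem exists_cos_sq_eq {c : ℝ} (h0 : 0 < c) (h1 : c < 1) :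
    ∃ θ, 0 < θ ∧ θ < π / 2 ∧ cos θ ^ 2 = c := by
  have hsqrt : 0 < √c := sqrt_pos.2 h0
  have hsqrt' : √c < 1 := by simpa using sqrt_lt_sqrt h0.le h1
  refine ⟨arccos √c, arccos_pos.2 hsqrt', arccos_lt_pi_div_two.2 hsqrt, ?_⟩
  rw [cos_arccos (by linarith) hsqrt'.le, sq_sqrt h0.le]

theorem eq_pi_div_of_sin_mul_eq_zero {n : ℕ} (hn : 2 ≤ n) (hθ : 0 < θ) (hsin : sin (n * θ) = 0)
    (hlt : (n : ℝ) < π / θ + 1) : θ = π / n := by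
  obtain ⟨m, hm⟩ := sin_eq_zero_iff.1 hsin
  have hn' : (2 : ℝ) ≤ n := by exact_mod_cast hn
  have hθlt : ((n : ℝ) - 1) * θ < π := by
    have := (lt_div_iff₀ hθ).1 (by linarith : (n : ℝ) - 1 < π / θ)
    linarith
  have hm0 : (0 : ℝ) < m := by
    by_contra h
    nlinarith [pi_pos]
  have hm2 : (m : ℝ) < 2 := by
    by_contra h
    nlinarith [pi_pos]
  have hm1 : m = 1 := by
    have h0 : (0 : ℤ) < m := by exact_mod_cast hm0
    have h2 : m < 2 := by exact_mod_cast hm2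
    omega
  rw [hm1, Int.cast_one, one_mul] at hm
  field_simp
  linarith

end Trigonometry

/-- The coordinates of `CoxeterDatum.chainRoot x y k` in the basis `x, y`, where
`a = ⟨x, φ y⟩` and `b = ⟨y, φ x⟩`. -/
noncomputable def chainCoeff (a b : ℝ) : ℕ → ℝ × ℝ
  | 0 => (1, 0)
  | k + 1 =>
    let c := chainCoeff a b k
    if Even k then (c.1, -(2 * a) * c.1 - c.2) else (-c.1 - (2 * b) * c.2, c.2)

section ChainCoeff

variable {a b θ : ℝ}

theorem chainCoeff_succ_of_even {k : ℕ} (hk : Even k) :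
    chainCoeff a b (k + 1) =
      ((chainCoeff a b k).1, -(2 * a) * (chainCoeff a b k).1 - (chainCoeff a b k).2) := by
  simp [chainCoeff, hk]

theorem chainCoeff_succ_of_not_even {k : ℕ} (hk : ¬Even k) :
    chainCoeff a b (k + 1) =
      (-(chainCoeff a b k).1 - (2 * b) * (chainCoeff a b k).2, (chainCoeff a b k).2) := by
  simp [chainCoeff, hk]

theorem chainCoeff_mul_sin (hcos : cos θ ≠ 0) (hc : cos θ ^ 2 = a * b) (k : ℕ) :
    (chainCoeff a b k).1 * sin θ = sin ((if Even k then k + 1 else k : ℕ) * θ) ∧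
      (chainCoeff a b k).2 * (sin θ * cos θ) =
        -a * sin ((if Even k then k else k + 1 : ℕ) * θ) := by
  have hrec : ∀ m : ℕ,
      sin ((m + 1 + 1 : ℕ) * θ) = 2 * cos θ * sin ((m + 1 : ℕ) * θ) - sin (m * θ) := by
    intro m
    have h1 : ((m + 1 + 1 : ℕ) : ℝ) * θ = ((m + 1 : ℕ) : ℝ) * θ + θ := by push_cast; ring
    have h2 : (m : ℝ) * θ = ((m + 1 : ℕ) : ℝ) * θ - θ := by push_cast; ring
    rw [h1, h2, sin_add, sin_sub]
    ring
  induction k with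
  | zero => simp [chainCoeff]
  | succ k ih =>
    obtain ⟨ihp, ihq⟩ := ih
    by_cases hk : Even k
    · have hk' : ¬Even (k + 1) := by simpa [Nat.even_add_one] using hk
      simp only [hk, hk', if_true, if_false] at ihp ihq ⊢
      rw [chainCoeff_succ_of_even hk]
      refine ⟨ihp, ?_⟩
      linear_combination (-(2 * a) * cos θ) * ihp - ihq + a * hrec k
    · have hk' : Even (k + 1) := Nat.even_add_one.2 hk
      simp only [hk, hk', if_true, if_false] at ihp ihq ⊢
      rw [chainCoeff_succ_of_not_even hk]
      refine ⟨mul_right_cancel₀ hcos ?_, ihq⟩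
      linear_combination (-cos θ) * ihp - 2 * b * ihq - cos θ * hrec k
        - 2 * sin ((k + 1 : ℕ) * θ) * hc

theorem chainCoeff_one : chainCoeff a b 1 = (1, -(2 * a)) := by
  simp [chainCoeff]

theorem chainCoeff_two : chainCoeff a b 2 = (4 * (a * b) - 1, -(2 * a)) := by
  rw [chainCoeff_succ_of_not_even Nat.not_even_one, chainCoeff_one, Prod.mk.injEq]
  constructor <;> ring

theorem sin_succ_mul_eq_zero (hcos : cos θ ≠ 0) (hc : cos θ ^ 2 = a * b) (ha : a ≠ 0) {k : ℕ}
    (h : (if Even k then (chainCoeff a b k).1 else (chainCoeff a b k).2) = 0) :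
    sin ((k + 1 : ℕ) * θ) = 0 := by
  obtain ⟨hp, hq⟩ := chainCoeff_mul_sin hcos hc k
  split_ifs at h hp hq
  · rw [← hp, h, zero_mul]
  · rw [h, zero_mul, eq_comm, mul_eq_zero] at hq
    exact hq.resolve_left (neg_ne_zero.2 ha)

theorem chainCoeff_nonpos (ha : a < 0) (hθ : 0 < θ) (hθ' : θ < π / 2) (hc : cos θ ^ 2 = a * b)
    {k : ℕ} (hk : sin (k * θ) ≤ 0) (hk' : sin ((k + 1 : ℕ) * θ) ≤ 0) :
    (chainCoeff a b k).1 ≤ 0 ∧ (chainCoeff a b k).2 ≤ 0 := by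
  have hsin : 0 < sin θ := sin_pos_of_pos_of_lt_pi hθ (by linarith [pi_pos])
  have hcos : 0 < cos θ := cos_pos_of_mem_Ioo ⟨by linarith [pi_pos], hθ'⟩
  have hsc := mul_pos hsin hcos
  obtain ⟨hp, hq⟩ := chainCoeff_mul_sin hcos.ne' hc k
  split_ifs at hp hq
  · constructor <;> nlinarith
  · constructor <;> nlinarith

theorem chainCoeff_invariant_of_one_le (ha : a < 0) (hb : b < 0) (hab : 1 ≤ a * b) (k : ℕ) :
    0 < (chainCoeff a b k).1 ∧ 0 ≤ (chainCoeff a b k).2 ∧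
      if Even k then (chainCoeff a b k).2 ≤ -a * (chainCoeff a b k).1
      else (chainCoeff a b k).1 ≤ -b * (chainCoeff a b k).2 := by
  induction k with
  | zero => simpa [chainCoeff] using ha.le
  | succ k ih =>
    obtain ⟨hp, hq, hpq⟩ := ih
    by_cases hk : Even k
    · have hk' : ¬Even (k + 1) := by simpa [Nat.even_add_one] using hk
      rw [if_pos hk] at hpq
      rw [if_neg hk', chainCoeff_succ_of_even hk]
      refine ⟨hp, ?_, ?_⟩ <;> nlinarith
    · have hk' : Even (k + 1) := Nat.even_add_one.2 hk
      rw [if_neg hk] at hpq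
      rw [if_pos hk', chainCoeff_succ_of_not_even hk]
      refine ⟨?_, hq, ?_⟩ <;> nlinarith

theorem chainCoeff_pos_of_one_le (ha : a < 0) (hb : b < 0) (hab : 1 ≤ a * b) (k : ℕ) :
    0 < if Even k then (chainCoeff a b k).1 else (chainCoeff a b k).2 := by
  obtain ⟨hp, -, hpq⟩ := chainCoeff_invariant_of_one_le ha hb hab k
  split_ifs at hpq ⊢
  · exact hp
  · nlinarith

end ChainCoeff

namespace CoxeterDatum

variable {S V₁ V₂ W : Type*} [AddCommGroup V₁] [Module ℝ V₁]
  [AddCommGroup V₂] [Module ℝ V₂] [Group W] (D : CoxeterDatum S V₁ V₂ W)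
  {W' : Subgroup W} {x y z z' : V₁}

section Roots

@[simp]
theorem rho₁_mul_apply (u v : W) (z : V₁) : D.ρ₁ (u * v) z = D.ρ₁ u (D.ρ₁ v z) := by
  rw [map_mul, Module.End.mul_apply]

@[simp]
theorem rho₁_one_apply (z : V₁) : D.ρ₁ 1 z = z := by
  rw [map_one, Module.End.one_apply]

@[simp]
theorem rho₁_inv_apply_rho₁ (u : W) (z : V₁) : D.ρ₁ u⁻¹ (D.ρ₁ u z) = z := by
  rw [← rho₁_mul_apply, inv_mul_cancel, rho₁_one_apply]

theorem r_inv (s : S) : (D.r s)⁻¹ = D.r s :=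
  inv_eq_of_mul_eq_one_right (D.r_sq s)

theorem alpha_ne_zero (s : S) : D.α s ≠ 0 := fun h => by
  simpa [h] using D.D1 s

theorem alpha_mem_Phi₁ (s : S) : D.α s ∈ D.Phi₁ := ⟨1, s, by simp⟩

theorem rho₁_mem_Phi₁ (w : W) (hz : z ∈ D.Phi₁) : D.ρ₁ w z ∈ D.Phi₁ := by
  obtain ⟨u, s, rfl⟩ := hz
  exact ⟨w * u, s, by simp⟩

theorem ne_zero_of_mem_Phi₁ (hz : z ∈ D.Phi₁) : z ≠ 0 := by
  obtain ⟨u, s, rfl⟩ := hz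
  intro h
  exact D.alpha_ne_zero s (by simpa using congrArg (D.ρ₁ u⁻¹) h)

theorem rho₁_r_alpha (s : S) : D.ρ₁ (D.r s) (D.α s) = -D.α s := by
  rw [D.hr₁, D.D1]
  module

theorem mem_PhiPos₁_or_mem_PhiNeg₁ (hz : z ∈ D.Phi₁) : z ∈ D.PhiPos₁ ∨ z ∈ D.PhiNeg₁ :=
  (Set.ext_iff.1 D.decomp₁ z).1 hz

theorem notMem_PhiNeg₁ (hz : z ∈ D.PhiPos₁) : z ∉ D.PhiNeg₁ :=
  fun h => PLC.neg_notMem D.D2a hz.2 h.2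

theorem pair_phi_self (hz : z ∈ D.Phi₁) : D.pair z (D.phi z) = 1 := by
  obtain ⟨u, s, rfl⟩ := hz
  rw [D.phi_equiv u _ (D.alpha_mem_Phi₁ s), D.phi_simple, D.pair_inv, D.D1]

theorem refl₁_rho₁ (w : W) (hz : z ∈ D.Phi₁) :
    D.refl₁ (D.ρ₁ w z) = w * D.refl₁ z * w⁻¹ := by
  obtain ⟨u, s, rfl⟩ := hz
  rw [← rho₁_mul_apply, D.refl₁_eq, D.refl₁_eq]
  group

theorem refl₁_alpha (s : S) : D.refl₁ (D.α s) = D.r s := by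
  simpa using D.refl₁_eq 1 s

theorem refl₁_mul_self (hz : z ∈ D.Phi₁) : D.refl₁ z * D.refl₁ z = 1 := by
  obtain ⟨u, s, rfl⟩ := hz
  rw [D.refl₁_eq]
  simp [mul_assoc, ← mul_assoc (D.r s) (D.r s), D.r_sq]

theorem refl₁_inv (hz : z ∈ D.Phi₁) : (D.refl₁ z)⁻¹ = D.refl₁ z :=
  inv_eq_of_mul_eq_one_right (D.refl₁_mul_self hz)

theorem refl₁_mem_T (hz : z ∈ D.Phi₁) : D.refl₁ z ∈ D.T := by
  obtain ⟨u, s, rfl⟩ := hz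
  exact ⟨u, s, D.refl₁_eq u s⟩

theorem rho₁_refl₁_self (hz : z ∈ D.Phi₁) : D.ρ₁ (D.refl₁ z) z = -z := by
  rw [D.refl₁_act z hz, D.pair_phi_self hz]
  module

theorem eq_smul_of_refl₁_eq (hz : z ∈ D.Phi₁) (hz' : z' ∈ D.Phi₁)
    (h : D.refl₁ z = D.refl₁ z') : z' = D.pair z' (D.phi z) • z := by
  have h' := D.refl₁_act z hz z'
  rw [h, D.rho₁_refl₁_self hz'] at h'
  have : (2 : ℝ) • z' = (2 : ℝ) • (D.pair z' (D.phi z) • z) := by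
    rw [smul_smul]
    linear_combination (norm := module) -h'
  exact smul_right_injective V₁ two_ne_zero this

end Roots

section SimpleRoots

theorem smul_alpha_ne_alpha {s t : S} (hst : s ≠ t) {c : ℝ} (hc : 0 < c) :
    c • D.α s ≠ D.α t := by
  intro h
  have hmem : c • D.α s ∈ PLC (Set.range D.α \ {D.α t}) :=
    PLC.smul_mem hc (PLC.subset ⟨⟨s, rfl⟩, D.α_inj.ne hst⟩)
  exact D.D2c t (h ▸ hmem)

theorem eq_smul_alpha_of_rho₁_r_mem_PhiNeg₁ {s : S} (hz : z ∈ D.PhiPos₁)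
    (hneg : D.ρ₁ (D.r s) z ∈ D.PhiNeg₁) : ∃ c : ℝ, 0 < c ∧ z = c • D.α s := by
  have hflip : (2 * D.pair z (D.β s)) • D.α s - z ∈ PLC (Set.range D.α) := by
    simpa [D.hr₁] using hneg.2
  exact PLC.eq_smul_of_add_eq_smul D.D2a ⟨s, rfl⟩ (D.D2c s) hz.2 hflip (add_sub_cancel z _)

theorem alpha_add_smul_alpha_notMem_Phi₁ {s t : S} (hst : s ≠ t) {K : ℝ} (hK : K < 0) :
    D.α s + K • D.α t ∉ D.Phi₁ := by
  intro hroot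
  rcases D.mem_PhiPos₁_or_mem_PhiNeg₁ hroot with hpos | hneg
  · obtain ⟨c, hc, h⟩ := PLC.eq_smul_of_add_eq_smul D.D2a ⟨s, rfl⟩ (D.D2c s)
      (PLC.smul_mem (neg_pos.2 hK) (PLC.subset ⟨t, rfl⟩)) hpos.2
      (show -K • D.α t + (D.α s + K • D.α t) = (1 : ℝ) • D.α s by module)
    refine D.smul_alpha_ne_alpha hst (div_pos hc (neg_pos.2 hK)) ?_
    rw [div_eq_mul_inv, mul_comm, ← smul_smul, ← h, smul_smul, inv_mul_cancel₀ (by linarith),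
      one_smul]
  · obtain ⟨c, hc, h⟩ := PLC.eq_smul_of_add_eq_smul D.D2a ⟨t, rfl⟩ (D.D2c t)
      (PLC.subset ⟨s, rfl⟩) hneg.2
      (show D.α s + -(D.α s + K • D.α t) = -K • D.α t by module)
    exact D.smul_alpha_ne_alpha hst.symm hc h.symm

end SimpleRoots

section Words

theorem submonoid_closure_range_r : Submonoid.closure (Set.range D.r) = ⊤ := by
  have : Set.range D.r = Set.range D.r ∪ (Set.range D.r)⁻¹ := by
    simp_rw [Set.inv_range, r_inv, Set.union_self]
  rw [this, ← Subgroup.closure_toSubmonoid, D.r_gen, Subgroup.top_toSubmonoid]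

theorem exists_prod_map_r_eq (w : W) : ∃ l : List S, (l.map D.r).prod = w := by
  have hw : w ∈ Submonoid.closure (Set.range D.r) :=
    D.submonoid_closure_range_r ▸ Submonoid.mem_top w
  induction hw using Submonoid.closure_induction_left with
  | one => exact ⟨[], rfl⟩
  | mul_left x hx y _ ih =>
    obtain ⟨s, rfl⟩ := hx
    obtain ⟨l, rfl⟩ := ih
    exact ⟨s :: l, by simp⟩

theorem commute_of_forall_rho₁_alpha_eq {q : W} (hq : ∀ s, D.ρ₁ q (D.α s) = D.α s) (w : W) :
    Commute q w := by
  obtain ⟨l, rfl⟩ := D.exists_prod_map_r_eq w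
  refine Commute.list_prod_right _ _ fun w hw => ?_
  obtain ⟨s, -, rfl⟩ := List.mem_map.1 hw
  have h := D.refl₁_eq q s
  rw [hq, refl₁_alpha] at h
  exact (eq_mul_inv_iff_mul_eq.1 h).symm

end Words

section ProportionalRoots

/-- Such a transvection `q` fixes every simple root `α s`, hence commutes with every generator:
`q^{±1} α s = α s ± f (α s) • α t` are roots, and `α s + K α t` with `K < 0` is not. -/
theorem commute_of_rho₁_eq_add_smul {q : W} {t : S} (f : V₁ →ₗ[ℝ] ℝ) (hft : f (D.α t) = 0)
    (hq : ∀ v, D.ρ₁ q v = v + f v • D.α t) (w : W) : Commute q w := by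
  have hq_inv : ∀ v, D.ρ₁ q⁻¹ v = v + (-f v) • D.α t := by
    intro v
    calc D.ρ₁ q⁻¹ v = D.ρ₁ q⁻¹ (D.ρ₁ q (v + (-f v) • D.α t)) := by
          congr 1
          rw [hq, map_add, map_smul, hft]
          module
    _ = v + (-f v) • D.α t := D.rho₁_inv_apply_rho₁ q _
  refine D.commute_of_forall_rho₁_alpha_eq (fun s => ?_) w
  rcases eq_or_ne s t with rfl | hst
  · simp [hq, hft]
  suffices f (D.α s) = 0 by simp [hq, this]
  refine le_antisymm (not_lt.1 fun hpos => ?_) (not_lt.1 fun hneg => ?_)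
  · exact D.alpha_add_smul_alpha_notMem_Phi₁ hst (neg_lt_zero.2 hpos)
      (hq_inv (D.α s) ▸ D.rho₁_mem_Phi₁ q⁻¹ (D.alpha_mem_Phi₁ s))
  · exact D.alpha_add_smul_alpha_notMem_Phi₁ hst hneg
      (hq (D.α s) ▸ D.rho₁_mem_Phi₁ q (D.alpha_mem_Phi₁ s))

/-- `q = r t * r_{u α s}` acts as a transvection along `α t`; it is central and conjugate to its
inverse by `r t`, hence an involution, and an involutive transvection is trivial. -/
theorem conj_r_eq_of_rho₁_alpha_eq_smul {u : W} {s t : S} {μ : ℝ}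
    (h : D.ρ₁ u (D.α s) = μ • D.α t) : u * D.r s * u⁻¹ = D.r t := by
  have hz : D.ρ₁ u (D.α s) ∈ D.Phi₁ := ⟨u, s, rfl⟩
  rw [← D.refl₁_eq]
  generalize D.ρ₁ u (D.α s) = z at h hz ⊢
  set q := D.r t * D.refl₁ z
  let f : V₁ →ₗ[ℝ] ℝ := (2 * μ) • D.pair.flip (D.phi z) - 2 • D.pair.flip (D.β t)
  have hq : ∀ v, D.ρ₁ q v = v + f v • D.α t := by
    intro v
    have hrz : D.ρ₁ (D.r t) z = -z := by rw [h, map_smul, D.rho₁_r_alpha, smul_neg]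
    rw [rho₁_mul_apply, D.refl₁_act z hz, map_sub, map_smul, hrz, D.hr₁]
    simp only [f, LinearMap.sub_apply, LinearMap.smul_apply, LinearMap.flip_apply]
    linear_combination (norm := module) (2 * D.pair v (D.phi z)) • h
  have hft : f (D.α t) = 0 := by
    have h1 : μ * D.pair (D.α t) (D.phi z) = 1 := by
      rw [← smul_eq_mul, ← LinearMap.smul_apply, ← map_smul, ← h, D.pair_phi_self hz]
    simp [f, D.D1, mul_assoc, h1]
  have hq_sq : q * q = 1 := by
    have hconj : D.r t * q * (D.r t)⁻¹ = q⁻¹ := by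
      simp only [q, mul_inv_rev, D.refl₁_inv hz, r_inv, mul_assoc]
      rw [← mul_assoc, D.r_sq, one_mul]
    rw [(D.commute_of_rho₁_eq_add_smul f hft hq (D.r t)).symm.eq, mul_inv_cancel_right] at hconj
    rw [← mul_inv_cancel q, ← hconj]
  have hf : ∀ v, f v = 0 := by
    intro v
    have h2 := congrArg (D.ρ₁ · v) hq_sq
    simp only [rho₁_mul_apply, rho₁_one_apply, hq, map_add, map_smul, hft] at h2
    have : (2 * f v) • D.α t = 0 := by linear_combination (norm := module) h2
    simpa [D.alpha_ne_zero] using this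
  have hq1 : q = 1 := D.ρ₁_inj (LinearMap.ext fun v => by simp [hq, hf])
  rw [← mul_right_inj (D.r t)]
  change q = _
  rw [hq1, D.r_sq]

theorem refl₁_eq_of_eq_smul (hz : z ∈ D.Phi₁) (hz' : z' ∈ D.Phi₁) {μ : ℝ} (h : z' = μ • z) :
    D.refl₁ z' = D.refl₁ z := by
  obtain ⟨u, s, rfl⟩ := hz
  obtain ⟨u', s', rfl⟩ := hz'
  have h' : D.ρ₁ (u⁻¹ * u') (D.α s') = μ • D.α s := by simp [h]
  rw [D.refl₁_eq, D.refl₁_eq, ← D.conj_r_eq_of_rho₁_alpha_eq_smul h']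
  group

theorem linearIndependent_of_refl₁_ne (hx : x ∈ D.Phi₁) (hy : y ∈ D.Phi₁)
    (hxy : D.refl₁ x ≠ D.refl₁ y) : LinearIndependent ℝ ![x, y] :=
  (LinearIndependent.pair_iff' (D.ne_zero_of_mem_Phi₁ hx)).2 fun _ h =>
    hxy (D.refl₁_eq_of_eq_smul hx hy h.symm).symm

end ProportionalRoots

section Length

theorem len_le (l : List S) : D.len (l.map D.r).prod ≤ l.length :=
  Nat.sInf_le ⟨l, rfl, rfl⟩

theorem exists_length_eq_len (w : W) :
    ∃ l : List S, l.length = D.len w ∧ (l.map D.r).prod = w := by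
  obtain ⟨l, hl⟩ := D.exists_prod_map_r_eq w
  exact Nat.sInf_mem (s := {n | ∃ l : List S, l.length = n ∧ (l.map D.r).prod = w})
    ⟨l.length, l, rfl, hl⟩

theorem len_r_mul_le (s : S) (w : W) : D.len (D.r s * w) ≤ D.len w + 1 := by
  obtain ⟨l, hl, rfl⟩ := D.exists_length_eq_len w
  simpa [hl] using D.len_le (s :: l)

theorem len_mul_refl₁_lt_length (hz : z ∈ D.PhiPos₁) (l : List S)
    (hneg : D.ρ₁ (l.map D.r).prod z ∈ D.PhiNeg₁) :
    D.len ((l.map D.r).prod * D.refl₁ z) < l.length := by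
  induction l with
  | nil => exact absurd (by simpa using hneg) (D.notMem_PhiNeg₁ hz)
  | cons s l ih =>
    simp only [List.map_cons, List.prod_cons, List.length_cons, rho₁_mul_apply] at hneg ⊢
    set u := (l.map D.r).prod
    rcases D.mem_PhiPos₁_or_mem_PhiNeg₁ (D.rho₁_mem_Phi₁ u hz.1) with hpos | hneg'
    · obtain ⟨c, -, hc⟩ := D.eq_smul_alpha_of_rho₁_r_mem_PhiNeg₁ hpos hneg
      have hr : u * D.refl₁ z * u⁻¹ = D.r s := by
        rw [← D.refl₁_rho₁ u hz.1, ← D.refl₁_alpha,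
          D.refl₁_eq_of_eq_smul (D.alpha_mem_Phi₁ s) (D.rho₁_mem_Phi₁ u hz.1) hc]
      have hu : D.r s * u * D.refl₁ z = u := by
        rw [← hr, inv_mul_cancel_right, mul_assoc, D.refl₁_mul_self hz.1, mul_one]
      rw [hu]
      exact Nat.lt_succ_of_le (D.len_le l)
    · calc D.len (D.r s * u * D.refl₁ z) ≤ D.len (u * D.refl₁ z) + 1 := by
            rw [mul_assoc]; exact D.len_r_mul_le s _
      _ < l.length + 1 := Nat.succ_lt_succ (ih hneg')

theorem len_mul_refl₁_lt {w : W} (hz : z ∈ D.PhiPos₁) (hneg : D.ρ₁ w z ∈ D.PhiNeg₁) :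
    D.len (w * D.refl₁ z) < D.len w := by
  obtain ⟨l, hl, rfl⟩ := D.exists_length_eq_len w
  exact hl ▸ D.len_mul_refl₁_lt_length hz l hneg

theorem mem_of_mem_SW {t : W} (ht : t ∈ D.SW W') : t ∈ W' :=
  (ht.2.symm ▸ Set.mem_singleton t : t ∈ D.Nbar t ∩ (W' : Set W)).2

theorem rho₁_mem_PhiPos₁_of_mem_SW {t : W} (ht : t ∈ D.SW W')
    (hz : z ∈ D.PhiPos₁) (hzW : D.refl₁ z ∈ W') (hne : D.refl₁ z ≠ t) :
    D.ρ₁ t z ∈ D.PhiPos₁ := by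
  refine (D.mem_PhiPos₁_or_mem_PhiNeg₁ (D.rho₁_mem_Phi₁ t hz.1)).resolve_right fun hneg => hne ?_
  have hmem : D.refl₁ z ∈ D.Nbar t ∩ (W' : Set W) :=
    ⟨⟨D.refl₁_mem_T hz.1, D.len_mul_refl₁_lt hz hneg⟩, hzW⟩
  rwa [ht.2] at hmem

end Length

section Dihedral

/-- The roots `x, r_y x, r_x r_y x, r_y r_x r_y x, …` -/
def chainRoot (x y : V₁) (k : ℕ) : V₁ :=
  D.ρ₁ (altEnd (D.refl₁ x) (D.refl₁ y) k) x

@[simp]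
theorem chainRoot_zero : D.chainRoot x y 0 = x := by
  simp [chainRoot, altEnd]

theorem chainRoot_succ (k : ℕ) :
    D.chainRoot x y (k + 1) = D.ρ₁ (D.refl₁ (if Even k then y else x)) (D.chainRoot x y k) := by
  rw [chainRoot, chainRoot, altEnd_succ', rho₁_mul_apply, apply_ite D.refl₁]

theorem chainRoot_eq (hx : x ∈ D.Phi₁) (hy : y ∈ D.Phi₁) (k : ℕ) :
    D.chainRoot x y k = (chainCoeff (D.pair x (D.phi y)) (D.pair y (D.phi x)) k).1 • x
      + (chainCoeff (D.pair x (D.phi y)) (D.pair y (D.phi x)) k).2 • y := by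
  induction k with
  | zero => simp [chainCoeff]
  | succ k ih =>
    rw [chainRoot_succ, ih, chainCoeff]
    split_ifs
    · rw [map_add, map_smul, map_smul, D.rho₁_refl₁_self hy, D.refl₁_act y hy]
      module
    · rw [map_add, map_smul, map_smul, D.rho₁_refl₁_self hx, D.refl₁_act x hx]
      module

theorem refl₁_mul_refl₁_eq_inv (hx : x ∈ D.Phi₁) (hy : y ∈ D.Phi₁) :
    D.refl₁ y * D.refl₁ x = (D.refl₁ x * D.refl₁ y)⁻¹ := by
  rw [mul_inv_rev, D.refl₁_inv hx, D.refl₁_inv hy]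

theorem refl₁_chainRoot_eq_iff (hx : x ∈ D.Phi₁) (hy : y ∈ D.Phi₁) (k : ℕ) :
    D.refl₁ (D.chainRoot x y k) = D.refl₁ (if Even k then y else x) ↔
      (D.refl₁ x * D.refl₁ y) ^ (k + 1) = 1 := by
  rw [chainRoot, D.refl₁_rho₁ _ hx, mul_inv_eq_iff_eq_mul, apply_ite D.refl₁, ← altEnd_succ',
    ← altEnd_eq_altEnd_iff (D.refl₁_inv hx) (D.refl₁_inv hy)]
  rfl

theorem chainCoeff_eq_zero_of_pow_eq_one (hx : x ∈ D.Phi₁) (hy : y ∈ D.Phi₁)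
    (hxy : D.refl₁ x ≠ D.refl₁ y) {k : ℕ} (h : (D.refl₁ x * D.refl₁ y) ^ (k + 1) = 1) :
    (if Even k then (chainCoeff (D.pair x (D.phi y)) (D.pair y (D.phi x)) k).1
      else (chainCoeff (D.pair x (D.phi y)) (D.pair y (D.phi x)) k).2) = 0 := by
  have hroot : D.chainRoot x y k ∈ D.Phi₁ := D.rho₁_mem_Phi₁ _ hx
  have hli := LinearIndependent.pair_iff.1 (D.linearIndependent_of_refl₁_ne hx hy hxy)
  have hprop := (D.refl₁_chainRoot_eq_iff hx hy k).2 h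
  split_ifs at hprop ⊢
  · obtain ⟨μ, hμ⟩ : ∃ μ : ℝ, D.chainRoot x y k = μ • y :=
      ⟨_, D.eq_smul_of_refl₁_eq hy hroot hprop.symm⟩
    rw [D.chainRoot_eq hx hy] at hμ
    generalize chainCoeff (D.pair x (D.phi y)) (D.pair y (D.phi x)) k = c at hμ ⊢
    refine (hli c.1 (c.2 - μ) ?_).1
    linear_combination (norm := module) hμ
  · obtain ⟨μ, hμ⟩ : ∃ μ : ℝ, D.chainRoot x y k = μ • x :=
      ⟨_, D.eq_smul_of_refl₁_eq hx hroot hprop.symm⟩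
    rw [D.chainRoot_eq hx hy] at hμ
    generalize chainCoeff (D.pair x (D.phi y)) (D.pair y (D.phi x)) k = c at hμ ⊢
    refine (hli (c.1 - μ) c.2 ?_).2
    linear_combination (norm := module) hμ

theorem pow_two_eq_one_iff_pair_eq_zero (hx : x ∈ D.Phi₁) (hy : y ∈ D.Phi₁)
    (hxy : D.refl₁ x ≠ D.refl₁ y) :
    (D.refl₁ x * D.refl₁ y) ^ 2 = 1 ↔ D.pair x (D.phi y) = 0 := by
  refine ⟨fun h => ?_, fun h => ?_⟩
  · simpa [chainCoeff] using D.chainCoeff_eq_zero_of_pow_eq_one hx hy hxy (k := 1) h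
  · refine (D.refl₁_chainRoot_eq_iff hx hy 1).1 ?_
    simp [D.chainRoot_eq hx hy, chainCoeff, h]

theorem chainRoot_mem_PhiPos₁ (hx : x ∈ D.Delta₁ W') (hy : y ∈ D.Delta₁ W')
    (k : ℕ) (hk : ∀ j < k, (D.refl₁ x * D.refl₁ y) ^ (j + 1) ≠ 1) :
    D.chainRoot x y k ∈ D.PhiPos₁ := by
  induction k with
  | zero => simpa using hx.1
  | succ k ih =>
    have hxW := D.mem_of_mem_SW hx.2
    have hyW := D.mem_of_mem_SW hy.2
    rw [chainRoot_succ]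
    refine D.rho₁_mem_PhiPos₁_of_mem_SW (W' := W') ?_ (ih fun j hj => hk j (by omega)) ?_
      (fun h => hk k k.lt_succ_self ((D.refl₁_chainRoot_eq_iff hx.1.1 hy.1.1 k).1 h))
    · split_ifs
      exacts [hy.2, hx.2]
    · rw [chainRoot, D.refl₁_rho₁ _ hx.1.1]
      have hw := altEnd_mem hxW hyW k
      exact mul_mem (mul_mem hw hxW) (inv_mem hw)

end Dihedral

section CanonicalPair

theorem smul_add_smul_notMem_PhiPos₁ (hx : x ∈ D.PhiPos₁) (hy : y ∈ D.PhiPos₁) {p q : ℝ}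
    (hp : p ≤ 0) (hq : q ≤ 0) : p • x + q • y ∉ D.PhiPos₁ := by
  intro h
  have h0 := PLC.add_smul_mem (neg_nonneg.2 hq) (PLC.add_smul_mem (neg_nonneg.2 hp) h.2 hx.2) hy.2
  exact D.D2a (by rwa [show p • x + q • y + -p • x + -q • y = 0 by module] at h0)

theorem pair_phi_nonpos (hx : x ∈ D.Delta₁ W') (hy : y ∈ D.Delta₁ W')
    (hxy : D.refl₁ x ≠ D.refl₁ y) : D.pair x (D.phi y) ≤ 0 := by
  by_contra! ha
  have hx1 := hx.1.1
  have hy1 := hy.1.1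
  have h1 : D.refl₁ x * D.refl₁ y ≠ 1 := fun h =>
    hxy ((mul_eq_one_iff_eq_inv.1 h).trans (D.refl₁_inv hy1))
  have h2 : (D.refl₁ x * D.refl₁ y) ^ 2 ≠ 1 := fun h =>
    ha.ne' ((D.pow_two_eq_one_iff_pair_eq_zero hx1 hy1 hxy).1 h)
  have hζ1 := D.chainRoot_mem_PhiPos₁ hx hy 1 (fun j hj => by
    obtain rfl : j = 0 := by omega
    simpa using h1)
  have hζ2 := D.chainRoot_mem_PhiPos₁ hx hy 2 (fun j hj => by
    obtain rfl | rfl : j = 0 ∨ j = 1 := by omega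
    exacts [by simpa using h1, h2])
  have hζ1' := D.chainRoot_mem_PhiPos₁ hy hx 1 (fun j hj => by
    obtain rfl : j = 0 := by omega
    rwa [zero_add, pow_one, D.refl₁_mul_refl₁_eq_inv hx1 hy1, inv_ne_one])
  rw [D.chainRoot_eq hx1 hy1, chainCoeff_one] at hζ1
  rw [D.chainRoot_eq hx1 hy1, chainCoeff_two] at hζ2
  rw [D.chainRoot_eq hy1 hx1, chainCoeff_one] at hζ1'
  rcases le_or_gt (1 / 4) (D.pair x (D.phi y) * D.pair y (D.phi x)) with hc | hc
  · -- `r_y x + 2 a r_x y + (4 a b - 1) x = 0`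
    have h0 := PLC.add_smul_mem (by linarith : 0 ≤ 4 * (D.pair x (D.phi y) * D.pair y (D.phi x)) - 1)
      (PLC.add_smul_mem (by linarith : 0 ≤ 2 * D.pair x (D.phi y)) hζ1.2 hζ1'.2) hx.1.2
    refine D.D2a ?_
    convert h0 using 1
    module
  · exact D.smul_add_smul_notMem_PhiPos₁ hx.1 hy.1 (by linarith) (by linarith) hζ2

theorem pair_phi_neg (hx : x ∈ D.Delta₁ W') (hy : y ∈ D.Delta₁ W')
    (hxy : D.refl₁ x ≠ D.refl₁ y) (h2 : (D.refl₁ x * D.refl₁ y) ^ 2 ≠ 1) :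
    D.pair x (D.phi y) < 0 ∧ D.pair y (D.phi x) < 0 := by
  have h2' : (D.refl₁ y * D.refl₁ x) ^ 2 ≠ 1 := by
    rwa [D.refl₁_mul_refl₁_eq_inv hx.1.1 hy.1.1, inv_pow, inv_ne_one]
  exact ⟨(D.pair_phi_nonpos hx hy hxy).lt_of_ne
      (mt (D.pow_two_eq_one_iff_pair_eq_zero hx.1.1 hy.1.1 hxy).2 h2),
    (D.pair_phi_nonpos hy hx hxy.symm).lt_of_ne
      (mt (D.pow_two_eq_one_iff_pair_eq_zero hy.1.1 hx.1.1 hxy.symm).2 h2')⟩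

/-- Otherwise the chain of roots would stay in `Φ₁⁺` up to step `⌈π / θ⌉`, where both of its
coordinates are `≤ 0`. -/
theorem exists_pow_eq_one_of_cos_sq (hx : x ∈ D.Delta₁ W') (hy : y ∈ D.Delta₁ W')
    (ha : D.pair x (D.phi y) < 0) {θ : ℝ} (hθ : 0 < θ) (hθ' : θ < π / 2)
    (hc : cos θ ^ 2 = D.pair x (D.phi y) * D.pair y (D.phi x)) :
    ∃ m : ℕ, 0 < m ∧ (m : ℝ) < π / θ + 1 ∧ (D.refl₁ x * D.refl₁ y) ^ m = 1 := by
  obtain ⟨k, hk, hs, hs'⟩ := exists_sin_mul_nonpos hθ hθ'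
  by_contra! h
  have hζ := D.chainRoot_mem_PhiPos₁ hx hy k fun j hj => h (j + 1) j.succ_pos (by
    have : ((j + 1 : ℕ) : ℝ) ≤ k := by exact_mod_cast hj
    linarith)
  rw [D.chainRoot_eq hx.1.1 hy.1.1] at hζ
  obtain ⟨hp, hq⟩ := chainCoeff_nonpos ha hθ hθ' hc hs hs'
  exact D.smul_add_smul_notMem_PhiPos₁ hx.1 hy.1 hp hq hζ

theorem pair_mul_pair_eq_cos_sq (hx : x ∈ D.Delta₁ W') (hy : y ∈ D.Delta₁ W')
    (hxy : D.refl₁ x ≠ D.refl₁ y) {n : ℕ} (hn : 2 ≤ n)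
    (hord : orderOf (D.refl₁ x * D.refl₁ y) = n) :
    D.pair x (D.phi y) * D.pair y (D.phi x) = cos (π / n) ^ 2 := by
  by_cases h2 : (D.refl₁ x * D.refl₁ y) ^ 2 = 1
  · have hn2 : n = 2 := le_antisymm (hord ▸ orderOf_le_of_pow_eq_one two_pos h2) hn
    simp [(D.pow_two_eq_one_iff_pair_eq_zero hx.1.1 hy.1.1 hxy).1 h2, hn2]
  obtain ⟨ha, hb⟩ := D.pair_phi_neg hx hy hxy h2
  have hn1 : n - 1 + 1 = n := by omega
  have hzero := D.chainCoeff_eq_zero_of_pow_eq_one hx.1.1 hy.1.1 hxy (k := n - 1)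
    (by rw [hn1, ← hord, pow_orderOf_eq_one])
  have hlt : D.pair x (D.phi y) * D.pair y (D.phi x) < 1 := by
    by_contra! hge
    exact (chainCoeff_pos_of_one_le ha hb hge (n - 1)).ne' hzero
  obtain ⟨θ, hθ, hθ', hc⟩ := exists_cos_sq_eq (mul_pos_of_neg_of_neg ha hb) hlt
  have hsin : sin (n * θ) = 0 := by
    have hcos : cos θ ≠ 0 := (cos_pos_of_mem_Ioo ⟨by linarith [pi_pos], hθ'⟩).ne'
    simpa [hn1] using sin_succ_mul_eq_zero hcos hc ha.ne hzero
  obtain ⟨m, hm, hmθ, hpow⟩ := D.exists_pow_eq_one_of_cos_sq hx hy ha hθ hθ' hc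
  have hnm : (n : ℝ) ≤ m := by exact_mod_cast hord ▸ orderOf_le_of_pow_eq_one hm hpow
  rw [← hc, eq_pi_div_of_sin_mul_eq_zero hn hθ hsin (by linarith)]

theorem one_le_pair_mul_pair (hx : x ∈ D.Delta₁ W') (hy : y ∈ D.Delta₁ W')
    (hxy : D.refl₁ x ≠ D.refl₁ y) (hinf : ¬IsOfFinOrder (D.refl₁ x * D.refl₁ y)) :
    1 ≤ D.pair x (D.phi y) * D.pair y (D.phi x) := by
  have h2 : (D.refl₁ x * D.refl₁ y) ^ 2 ≠ 1 := fun h =>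
    hinf (isOfFinOrder_iff_pow_eq_one.2 ⟨2, two_pos, h⟩)
  obtain ⟨ha, hb⟩ := D.pair_phi_neg hx hy hxy h2
  by_contra! hlt
  obtain ⟨θ, hθ, hθ', hc⟩ := exists_cos_sq_eq (mul_pos_of_neg_of_neg ha hb) hlt
  obtain ⟨m, hm, -, hpow⟩ := D.exists_pow_eq_one_of_cos_sq hx hy ha hθ hθ' hc
  exact hinf (isOfFinOrder_iff_pow_eq_one.2 ⟨m, hm, hpow⟩)

end CanonicalPair

end CoxeterDatum

theorem stmt19_general {S V₁ V₂ W : Type*} [AddCommGroup V₁] [Module ℝ V₁]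
    [AddCommGroup V₂] [Module ℝ V₂] [Group W]
    (D : CoxeterDatum S V₁ V₂ W)
    (W' : Subgroup W)
    (x y : V₁) (hx : x ∈ D.Delta₁ W') (hy : y ∈ D.Delta₁ W')
    (hxy : D.refl₁ x ≠ D.refl₁ y) :
    D.pair x (D.phi y) ≤ 0 ∧
    (∀ n : ℕ, 2 ≤ n → orderOf (D.refl₁ x * D.refl₁ y) = n →
      D.pair x (D.phi y) * D.pair y (D.phi x) = Real.cos (Real.pi / n) ^ 2) ∧
    (¬ IsOfFinOrder (D.refl₁ x * D.refl₁ y) →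
      1 ≤ D.pair x (D.phi y) * D.pair y (D.phi x)) :=
  ⟨D.pair_phi_nonpos hx hy hxy, fun _ hn hord => D.pair_mul_pair_eq_cos_sq hx hy hxy hn hord,
    D.one_le_pair_mul_pair hx hy hxy⟩

/-- Let `W'` be a reflection subgroup of `W` and `x, y ∈ Δ₁(W')` with
`r_x ≠ r_y`, and let `n ∈ ℕ ∪ {∞}` be the order of `r_x r_y`.  Then
`⟨x, φ y⟩ ≤ 0`; moreover `⟨x, φ y⟩ ⟨y, φ x⟩ = cos²(π/n)` if `n ∈ ℕ`, `n ≥ 2`, and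
`⟨x, φ y⟩ ⟨y, φ x⟩ ∈ [1, ∞)` if `n = ∞`. -/
theorem stmt19 {S V₁ V₂ W : Type*} [AddCommGroup V₁] [Module ℝ V₁]
    [AddCommGroup V₂] [Module ℝ V₂] [Group W]
    (D : CoxeterDatum S V₁ V₂ W)
    (W' : Subgroup W) (hW' : D.IsReflectionSubgroup W')
    (x y : V₁) (hx : x ∈ D.Delta₁ W') (hy : y ∈ D.Delta₁ W')
    (hxy : D.refl₁ x ≠ D.refl₁ y) :
    D.pair x (D.phi y) ≤ 0 ∧
    (∀ n : ℕ, 2 ≤ n → orderOf (D.refl₁ x * D.refl₁ y) = n →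
      D.pair x (D.phi y) * D.pair y (D.phi x) = Real.cos (Real.pi / n) ^ 2) ∧
    (¬ IsOfFinOrder (D.refl₁ x * D.refl₁ y) →
      1 ≤ D.pair x (D.phi y) * D.pair y (D.phi x)) :=
  stmt19_general D W' x y hx hy hxy
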